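/- arXiv:2605.25110 — 2 statements merged into one kernel-verified Lean document; each statement's English description precedes it below -/
import Mathlib

section
/- Let ι be a nonempty finite index set, let w, u : ι → ℝ, and let i* ∈ ι with w(i*) < w(i) for every i ≠ i*. Then the soft selector softminsel_γ(w, u) = ∑_{i∈ι} u(i) · π_γ(i) converges to u(i*) as γ → 0 from the right; that is, in the deterministic limit the selector returns the value of u at the unique minimizer of w (the log-variance along the minimal-cost path in uDTW). -/
open Finset Real Filter Topology

/-!
Shifting every exponent by the minimal value `w i⋆` leaves the softmin weights unchanged. After
the shift the numerator of `π_γ(i⋆)` is `1`, while for `i ≠ i⋆` it is `exp (-(w i - w i⋆) / γ)`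
with `w i - w i⋆ > 0`, which tends to `0` as `γ → 0⁺`. Hence the weights converge to the
indicator of `i⋆`, and the weighted sum to `u i⋆`.
-/

noncomputable def softminWeight {ι : Type*} [Fintype ι] (w : ι → ℝ) (μ γ : ℝ) (i : ι) : ℝ :=
  exp (-(w i - μ) / γ) / ∑ j, exp (-(w j - μ) / γ)

theorem softminWeight_eq_of_shift {ι : Type*} [Fintype ι] (w : ι → ℝ) (μ c γ : ℝ) (i : ι) :
    softminWeight w μ γ i = softminWeight w c γ i := by
  have hsplit : ∀ j, exp (-(w j - μ) / γ) = exp (-(w j - c) / γ) * exp (-(c - μ) / γ) := by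
    intro j
    rw [← exp_add, ← add_div]
    ring_nf
  simp only [softminWeight, hsplit, ← sum_mul]
  exact mul_div_mul_right _ _ (exp_pos _).ne'

theorem tendsto_exp_neg_div_nhdsGT_zero {a : ℝ} (ha : 0 < a) :
    Tendsto (fun γ : ℝ => exp (-a / γ)) (𝓝[>] 0) (𝓝 0) := by
  have h : Tendsto (fun γ : ℝ => -a * γ⁻¹) (𝓝[>] 0) atBot :=
    tendsto_inv_nhdsGT_zero.const_mul_atTop_of_neg (neg_neg_of_pos ha)
  simp only [div_eq_mul_inv]
  exact tendsto_exp_atBot.comp h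

theorem tendsto_softminWeight_of_isStrictMin {ι : Type*} [Fintype ι] [DecidableEq ι]
    (w : ι → ℝ) (μ : ℝ) {istar : ι} (hmin : ∀ i, i ≠ istar → w istar < w i) (i : ι) :
    Tendsto (fun γ => softminWeight w μ γ i) (𝓝[>] 0) (𝓝 (if i = istar then 1 else 0)) := by
  have hnum : ∀ j, Tendsto (fun γ : ℝ => exp (-(w j - w istar) / γ)) (𝓝[>] 0)
      (𝓝 (if j = istar then 1 else 0)) := by
    intro j
    by_cases hj : j = istar
    · simp [hj]
    · simpa [hj] using tendsto_exp_neg_div_nhdsGT_zero (sub_pos.mpr (hmin j hj))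
  have hden : Tendsto (fun γ : ℝ => ∑ j, exp (-(w j - w istar) / γ)) (𝓝[>] 0) (𝓝 1) := by
    simpa using tendsto_finsetSum univ fun j _ => hnum j
  simp_rw [softminWeight_eq_of_shift w μ (w istar)]
  exact (hnum i).div hden one_ne_zero |>.trans_eq (by simp)

theorem softminsel_tendsto_value_at_min_general
    {ι : Type*} [Fintype ι]
    (w u : ι → ℝ) (μ : ℝ) (istar : ι) (hmin : ∀ i : ι, i ≠ istar → w istar < w i) :
    Tendsto (fun γ : ℝ =>
        ∑ i, u i * (Real.exp (-(w i - μ) / γ) / ∑ j, Real.exp (-(w j - μ) / γ)))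
      (nhdsWithin 0 (Set.Ioi 0)) (nhds (u istar)) := by
  classical
  have h := tendsto_finsetSum univ fun i _ =>
    (tendsto_softminWeight_of_isStrictMin w μ hmin i).const_mul (u i)
  simpa [softminWeight] using h

/-- Deterministic limit of the soft selector: if `i⋆` is the unique minimizer of `w`, then
`softminsel_γ(w, u) = ∑ i, u i · π_γ(i)` tends to `u i⋆` as `γ → 0⁺`, i.e. the selector
returns the value of `u` at the unique minimizer of `w`. -/
theorem softminsel_tendsto_value_at_min
    {ι : Type*} [Fintype ι] [Nonempty ι]
    (w u : ι → ℝ) (μ : ℝ) (istar : ι) (hmin : ∀ i : ι, i ≠ istar → w istar < w i) :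
    Tendsto (fun γ : ℝ =>
        ∑ i, u i * (Real.exp (-(w i - μ) / γ) / ∑ j, Real.exp (-(w j - μ) / γ)))
      (nhdsWithin 0 (Set.Ioi 0)) (nhds (u istar)) :=
  softminsel_tendsto_value_at_min_general w u μ istar hmin
end

section
/- Define D : ℕ → ℕ → ℕ by D(m, n) = ∑_{i=0}^{min(m,n)} C(m, i) · C(n, i) · 2^i, where C denotes the binomial coefficient. Then D satisfies the Delannoy recurrence: D(0, n) = 1 and D(m, 0) = 1 for all m, n, and for all m ≥ 1 and n ≥ 1, D(m, n) = D(m−1, n) + D(m, n−1) + D(m−1, n−1). -/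
open Finset

/-- Closed-form expression for the Delannoy numbers:
`delannoy m n = ∑_{i=0}^{min(m,n)} C(m,i)·C(n,i)·2^i`. -/
def delannoy (m n : ℕ) : ℕ :=
  ∑ i ∈ Finset.range (min m n + 1), Nat.choose m i * Nat.choose n i * 2 ^ i

private def g (m n i : ℕ) : ℕ := Nat.choose m i * Nat.choose n i * 2 ^ i

private lemma g_zero_of_big (m n K : ℕ) (hK : min m n < K) : g m n K = 0 := by
  unfold g
  rcases le_or_gt m n with h | h
  · rw [min_eq_left h] at hK
    rw [Nat.choose_eq_zero_of_lt hK]; ring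
  · rw [min_eq_right h.le] at hK
    rw [Nat.choose_eq_zero_of_lt hK]; ring

private lemma delannoy_eq_sum (m n K : ℕ) (hK : min m n + 1 ≤ K) :
    delannoy m n = ∑ i ∈ Finset.range K, g m n i := by
  unfold delannoy
  apply Finset.sum_subset (Finset.range_subset_range.mpr hK)
  intro i _ hi
  simp only [Finset.mem_range, not_lt] at hi
  exact g_zero_of_big m n i (by omega)

private lemma g_pointwise (m n i : ℕ) :
    g (m+1) (n+1) (i+1) + 2 * g m n (i+1)
      = g m (n+1) (i+1) + g (m+1) n (i+1) + g m n (i+1) + 2 * g m n i := by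
  unfold g
  rw [Nat.choose_succ_succ m i, Nat.choose_succ_succ n i, pow_succ]
  ring

private lemma key (m n : ℕ) :
    delannoy (m+1) (n+1) = delannoy m (n+1) + delannoy (m+1) n + delannoy m n := by
  set K : ℕ := min m n + 2 with hKdef
  rw [delannoy_eq_sum _ _ (K+1) (by omega), delannoy_eq_sum m (n+1) (K+1) (by omega),
      delannoy_eq_sum (m+1) n (K+1) (by omega), delannoy_eq_sum m n (K+1) (by omega)]
  have e0 : ∀ a b : ℕ, g a b 0 = 1 := by intro a b; simp [g]
  have peel : ∀ a b : ℕ, ∑ i ∈ Finset.range (K+1), g a b i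
      = (∑ i ∈ Finset.range K, g a b (i+1)) + 1 := by
    intro a b; rw [Finset.sum_range_succ', e0]
  rw [peel, peel, peel, peel]
  have hsum : ∑ i ∈ Finset.range K, (g (m+1) (n+1) (i+1) + 2 * g m n (i+1))
      = ∑ i ∈ Finset.range K,
          (g m (n+1) (i+1) + g (m+1) n (i+1) + g m n (i+1) + 2 * g m n i) := by
    exact Finset.sum_congr rfl fun i _ => g_pointwise m n i
  have hshift : (∑ i ∈ Finset.range K, g m n i)
      = (∑ i ∈ Finset.range K, g m n (i+1)) + 1 := by
    have h1 : ∑ i ∈ Finset.range (K+1), g m n i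
        = (∑ i ∈ Finset.range K, g m n i) + g m n K := Finset.sum_range_succ _ _
    rw [g_zero_of_big m n K (by omega), add_zero] at h1
    rw [← h1, peel]
  simp only [Finset.sum_add_distrib] at hsum
  simp only [← Finset.mul_sum] at hsum
  omega

/-- The closed-form Delannoy numbers satisfy the Delannoy recurrence:
`D(0, n) = 1`, `D(m, 0) = 1`, and for `m, n ≥ 1`,
`D(m, n) = D(m−1, n) + D(m, n−1) + D(m−1, n−1)`. -/
theorem delannoy_recurrence :
    (∀ n : ℕ, delannoy 0 n = 1) ∧
    (∀ m : ℕ, delannoy m 0 = 1) ∧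
    (∀ m n : ℕ, 1 ≤ m → 1 ≤ n →
      delannoy m n = delannoy (m - 1) n + delannoy m (n - 1) + delannoy (m - 1) (n - 1)) := by
  refine ⟨?_, ?_, ?_⟩
  · intro n; simp [delannoy]
  · intro m; simp [delannoy]
  · intro m n hm hn
    obtain ⟨m, rfl⟩ := Nat.exists_eq_add_of_le hm
    obtain ⟨n, rfl⟩ := Nat.exists_eq_add_of_le hn
    simpa [Nat.add_comm] using key m n
end
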